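/- Let $u \ge 3$, let $p_1, \dots, p_u$ be pairwise distinct primes and $n_1, \dots, n_u$ positive integers. Then $\sum_{i=1}^u \frac{p_i^{n_i+1}-p_i}{p_i-1} \le \frac{1}{2}\prod_{i=1}^u p_i^{n_i}$. -/

import Mathlib

/-!
Put `q = p ^ n`. Since `p / (p - 1) ≤ 2` for `p ≥ 2`, each term
`(p ^ (n + 1) - p) / (p - 1) = p (q - 1) / (p - 1)` is at most `2 (q - 1)`, so it suffices that
`4 ∑ (qᵢ - 1) ≤ ∏ qᵢ` for at least three distinct integers `qᵢ ≥ 2` (distinct prime powers).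
For three of them this is polynomial arithmetic once they are sorted; adding a further
`q ≥ 2` raises the left side by `4 (q - 1)` and the right side by `(q - 1) ∏ qᵢ ≥ 8 (q - 1)`.
-/

open Finset

theorem four_mul_add_le_mul_add_twelve_of_lt {a b c : ℤ} (ha : 2 ≤ a) (hab : a < b)
    (hbc : b < c) : 4 * (a + b + c) ≤ a * b * c + 12 := by
  have ha : 0 ≤ a - 2 := by omega
  have hb : 0 ≤ b - 3 := by omega
  have hc : 0 ≤ c - 4 := by omega
  nlinarith [mul_nonneg (mul_nonneg ha hb) hc, mul_nonneg ha hb, mul_nonneg ha hc,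
    mul_nonneg hb hc]

theorem four_mul_add_le_mul_add_twelve {a b c : ℤ} (ha : 2 ≤ a) (hb : 2 ≤ b) (hc : 2 ≤ c)
    (hab : a ≠ b) (hac : a ≠ c) (hbc : b ≠ c) : 4 * (a + b + c) ≤ a * b * c + 12 := by
  wlog hab' : a < b generalizing a b c
  · linarith [this hb ha hc hab.symm hbc hac (by omega)]
  wlog hbc' : b < c generalizing a b c
  · rcases lt_or_gt_of_ne hac with hac' | hca
    · linarith [this ha hc hb hac hab hbc.symm hac' (by omega)]
    · linarith [this hc ha hb hac.symm hbc.symm hab hca hab']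
  exact four_mul_add_le_mul_add_twelve_of_lt ha hab' hbc'

theorem four_mul_sum_sub_one_le_prod {ι : Type*} [DecidableEq ι] (s : Finset ι) (f : ι → ℤ)
    (hf : Set.InjOn f s) (h2 : ∀ i ∈ s, 2 ≤ f i) (hs : 3 ≤ #s) :
    4 * ∑ i ∈ s, (f i - 1) ≤ ∏ i ∈ s, f i := by
  induction s using Finset.induction_on with
  | empty => simp at hs
  | insert a t ha ih =>
    rw [coe_insert, Set.injOn_insert (by simpa using ha)] at hf
    rw [card_insert_of_notMem ha] at hs
    simp only [mem_insert, forall_eq_or_imp] at h2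
    rw [sum_insert ha, prod_insert ha]
    rcases Nat.lt_or_ge 2 #t with ht | ht
    · have ih := ih hf.1 h2.2 ht
      have h8 : 8 ≤ ∏ i ∈ t, f i := by
        calc (8 : ℤ) ≤ 2 ^ #t := by exact_mod_cast Nat.pow_le_pow_right two_pos ht
          _ = ∏ _i ∈ t, 2 := (prod_const 2).symm
          _ ≤ ∏ i ∈ t, f i := prod_le_prod (fun _ _ => zero_le_two) h2.2
      nlinarith [h2.1]
    · obtain ⟨b, c, hbc, rfl⟩ := card_eq_two.mp (show #t = 2 by omega)
      simp only [coe_pair, Set.injOn_pair, Set.image_pair, Set.mem_insert_iff,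
        Set.mem_singleton_iff, not_or, mem_insert, mem_singleton, forall_eq_or_imp,
        forall_eq] at hf h2
      rw [sum_pair hbc, prod_pair hbc]
      linarith [four_mul_add_le_mul_add_twelve h2.1 h2.2.1 h2.2.2 hf.2.1 hf.2.2 (hbc ∘ hf.1)]

theorem pow_succ_sub_div_sub_one_le {K : Type*} [Field K] [LinearOrder K] [IsStrictOrderedRing K]
    {p : K} (hp : 2 ≤ p) (n : ℕ) : (p ^ (n + 1) - p) / (p - 1) ≤ 2 * (p ^ n - 1) := by
  have hp1 : 0 < p - 1 := by linarith
  have hpn : 0 ≤ p ^ n - 1 := sub_nonneg.2 (one_le_pow₀ (by linarith))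
  rw [div_le_iff₀ hp1, pow_succ]
  nlinarith [mul_nonneg (sub_nonneg.2 hp) hpn]

theorem stmt_1 (u : ℕ) (hu : 3 ≤ u) (p n : Fin u → ℕ)
    (hp : ∀ i, (p i).Prime) (hinj : Function.Injective p)
    (hn : ∀ i, 0 < n i) :
    ∑ i, ((p i : ℚ) ^ (n i + 1) - p i) / ((p i : ℚ) - 1)
      ≤ (1 / 2 : ℚ) * ∏ i, (p i : ℚ) ^ (n i) := by
  have hq_inj : Function.Injective fun i ↦ ((p i ^ n i : ℕ) : ℤ) := fun i j h ↦
    hinj ((hp i).pow_inj' (hp j) (hn i).ne' (hn j).ne' (Int.ofNat_inj.mp h)).1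
  have hq_two : ∀ i ∈ univ, 2 ≤ ((p i ^ n i : ℕ) : ℤ) := fun i _ ↦ by
    exact_mod_cast (hp i).two_le.trans (Nat.le_self_pow (hn i).ne' _)
  have hkey := four_mul_sum_sub_one_le_prod univ _ hq_inj.injOn hq_two (by simpa using hu)
  push_cast at hkey
  calc ∑ i, ((p i : ℚ) ^ (n i + 1) - p i) / ((p i : ℚ) - 1)
      ≤ ∑ i, 2 * ((p i : ℚ) ^ n i - 1) :=
        sum_le_sum fun i _ ↦ pow_succ_sub_div_sub_one_le (by exact_mod_cast (hp i).two_le) _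
    _ = (1 / 2) * (4 * ∑ i, ((p i : ℚ) ^ n i - 1)) := by rw [← mul_sum]; ring
    _ ≤ (1 / 2) * ∏ i, (p i : ℚ) ^ n i := by gcongr; exact_mod_cast hkey
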